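/- arXiv:1905.02977 — 2 statements merged into one kernel-verified Lean document; each statement's English description precedes it below -/
import Mathlib

section
/- Let the Loop local averaging map send (p₀, p₁, …, pₙ) to (p₀', p₁, …, pₙ) with p₀' = (1−nα)p₀ + α∑ⱼpⱼ, iterated with edge updates so that the sequence p₀^{k+1} = (1−nα)p₀^k + α∑ⱼ pⱼ^k where each pⱼ^{k+1} = (1/8)(3p₀^k + 3pⱼ^k + p_{j−1}^k + p_{j+1}^k). Then the sequence {p₀^k} converges, and its limit equals (1−nl)p₀^0 + l∑_{j=1}^n pⱼ^0 with l = 1/(n + 3/(8α)). -/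
/-- Lemma 3.1, Loop's limit position formula: iterating the Loop
vertex rule `p₀^{k+1} = (1−nα)p₀^k + α∑ⱼpⱼ^k` together with the edge updates
`pⱼ^{k+1} = (1/8)(3p₀^k + 3pⱼ^k + p_{j−1}^k + p_{j+1}^k)` (indices mod n),
the central sequence converges to `(1−nl)p₀^0 + l∑ⱼpⱼ^0` with
`l = 1/(n + 3/(8α))`. -/
theorem loop_limit_position (n : ℕ) [NeZero n] (hn : 3 ≤ n) (α : ℝ)
    (hα : α = (1 / (n : ℝ)) * (5 / 8 - (3 / 8 + (1 / 4) * Real.cos (2 * Real.pi / n)) ^ 2))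
    (p : ℕ → EuclideanSpace ℝ (Fin 3))
    (q : ℕ → Fin n → EuclideanSpace ℝ (Fin 3))
    (hp : ∀ k, p (k + 1) = (1 - (n : ℝ) * α) • p k + α • ∑ j, q k j)
    (hq : ∀ k (j : Fin n),
      q (k + 1) j = ((8 : ℝ)⁻¹) • ((3 : ℝ) • p k + (3 : ℝ) • q k j + q k (j - 1) + q k (j + 1))) :
    Filter.Tendsto p Filter.atTop
      (nhds ((1 - (n : ℝ) * (1 / ((n : ℝ) + 3 / (8 * α)))) • p 0 +
        (1 / ((n : ℝ) + 3 / (8 * α))) • ∑ j, q 0 j)) := by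
  have hn0 : (0 : ℝ) < n := by
    have : 0 < n := by omega
    exact_mod_cast this
  set c : ℝ := Real.cos (2 * Real.pi / n) with hc
  have hc1 : c ≤ 1 := Real.cos_le_one _
  have hc2 : -1 ≤ c := Real.neg_one_le_cos _
  have hnα : (n : ℝ) * α = 5 / 8 - (3 / 8 + (1 / 4) * c) ^ 2 := by
    rw [hα]; field_simp
  have hαpos : 0 < α := by
    nlinarith [sq_nonneg (3 / 8 + (1 / 4) * c), sq_nonneg (c - 1), sq_nonneg (c + 1)]
  set lam : ℝ := 5 / 8 - (n : ℝ) * α with hlam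
  have hlam0 : 0 ≤ lam := by rw [hlam, hnα]; nlinarith [sq_nonneg (3 / 8 + (1 / 4) * c)]
  have hlam1 : lam < 1 := by rw [hlam, hnα]; nlinarith [sq_nonneg (3 / 8 + (1 / 4) * c)]
  have hden : (0 : ℝ) < (n : ℝ) + 3 / (8 * α) := by positivity
  set l : ℝ := 1 / ((n : ℝ) + 3 / (8 * α)) with hl
  have hkey : l * (3 / 8 + (n : ℝ) * α) = α := by
    rw [hl]; field_simp; ring
  clear_value lam l
  set s : ℕ → EuclideanSpace ℝ (Fin 3) := fun k => ∑ j, q k j with hsdef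
  have hs0eq : s 0 = ∑ j, q 0 j := rfl
  set L : EuclideanSpace ℝ (Fin 3) := (1 - (n : ℝ) * l) • p 0 + l • s 0 with hLdef
  set w : EuclideanSpace ℝ (Fin 3) := (n : ℝ) • p 0 - s 0 with hwdef
  clear_value L w
  have hs : ∀ k, s (k + 1) = ((3 * (n : ℝ)) / 8) • p k + (5 / 8 : ℝ) • s k := by
    intro k
    have h1 : ∑ j, q k (j - 1) = s k :=
      Fintype.sum_equiv (Equiv.subRight (1 : Fin n)) _ _ (fun j => rfl)
    have h2 : ∑ j, q k (j + 1) = s k :=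
      Fintype.sum_equiv (Equiv.addRight (1 : Fin n)) _ _ (fun j => rfl)
    calc s (k + 1)
        = ∑ j, ((8 : ℝ)⁻¹) • ((3 : ℝ) • p k + (3 : ℝ) • q k j + q k (j - 1) + q k (j + 1)) :=
          Finset.sum_congr rfl fun j _ => hq k j
      _ = ((8 : ℝ)⁻¹) • (∑ j : Fin n, ((3 : ℝ) • p k) + (3 : ℝ) • s k + s k + s k) := by
          rw [← Finset.smul_sum]
          congr 1
          rw [Finset.sum_add_distrib, Finset.sum_add_distrib, Finset.sum_add_distrib, h1, h2]
          simp only [hsdef]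
          rw [Finset.smul_sum]
      _ = ((3 * (n : ℝ)) / 8) • p k + (5 / 8 : ℝ) • s k := by
          rw [Finset.sum_const, Finset.card_univ, Fintype.card_fin]
          rw [← Nat.cast_smul_eq_nsmul ℝ]
          module
  clear_value s
  have key : ∀ k, p k = L + (lam ^ k * l) • w ∧
      s k = (n : ℝ) • L + (lam ^ k * ((n : ℝ) * l - 1)) • w := by
    intro k
    induction k with
    | zero =>
      constructor
      · rw [hLdef, hwdef]; simp only [pow_zero, one_mul]; module
      · rw [hLdef, hwdef]; simp only [pow_zero, one_mul]; module
    | succ k ih =>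
      obtain ⟨ihp, ihs⟩ := ih
      have hsk : (∑ j, q k j) = s k := by rw [hsdef]
      constructor
      · rw [hp k, hsk, ihp, ihs]
        match_scalars
        · ring
        · linear_combination (lam ^ k) * hkey - (lam ^ k * l) * hlam
      · rw [hs k, ihp, ihs]
        match_scalars
        · ring
        · linear_combination (lam ^ k * (n : ℝ)) * hkey + (lam ^ k * (1 - (n : ℝ) * l)) * hlam
  have hpk : ∀ k, p k = L + (lam ^ k * l) • w := fun k => (key k).1
  have h0 : Filter.Tendsto (fun k => lam ^ k) Filter.atTop (nhds 0) :=
    tendsto_pow_atTop_nhds_zero_of_lt_one hlam0 hlam1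
  have h2 := ((h0.mul_const l).smul_const w).const_add L
  have h3 : Filter.Tendsto p Filter.atTop (nhds (L + ((0 : ℝ) * l) • w)) := by
    have : p = fun k => L + (lam ^ k * l) • w := funext hpk
    rw [this]; exact h2
  simpa using h3
end

section
/- Aubin–Nitsche duality: under the hypotheses of the previous statement and assuming H²-regularity of the dual problem (for each g ∈ L²(S) the solution w of a(φ,w) = (g,φ) satisfies ‖w‖_{H²(S)} ≤ C‖g‖_{L²(S)}), the Galerkin error satisfies the improved L² bound ‖u − u^h‖_{L²(S)} ≤ C h² ‖u‖_{H²(S)}. -/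
/-- Aubin–Nitsche duality, Theorem 4.1 `l = 0` case: under the
Céa-lemma setting (symmetric coercive bounded bilinear form `a` on
`H = H¹₀(S)`, Galerkin solution `u^h ∈ V_h`), with the L² inner product `ip`
and L² norm `norm₀ v = √(ip v v)`, the approximation property
`inf_{v∈V_h}‖w − v‖_{H¹} ≤ c·h·‖w‖_{H²}` for regular `w`, H²-regularity of the
dual problem (for each `g` the solution `w` of `a(φ,w) = (g,φ)` satisfies
`‖w‖_{H²} ≤ C_reg·‖g‖_{L²}`), and the H¹ error bound
`‖u − u^h‖_{H¹} ≤ C₁·h·‖u‖_{H²}`, the Galerkin error satisfies the improved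
L² bound `‖u − u^h‖_{L²} ≤ C·h²·‖u‖_{H²}`. -/
theorem aubin_nitsche_duality
    {H : Type*} [NormedAddCommGroup H] [NormedSpace ℝ H]
    (a ip : H →ₗ[ℝ] H →ₗ[ℝ] ℝ)
    (M γ : ℝ) (hγ : 0 < γ) (hM : 0 < M)
    (hsymm : ∀ v w, a v w = a w v)
    (hcoer : ∀ v, γ * ‖v‖ ^ 2 ≤ a v v)
    (hbdd : ∀ v w, |a v w| ≤ M * ‖v‖ * ‖w‖)
    (hip_nn : ∀ v, 0 ≤ ip v v) (hip_symm : ∀ v w, ip v w = ip w v)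
    (norm₀ : H → ℝ) (hnorm₀ : ∀ v, norm₀ v = Real.sqrt (ip v v))
    (Vh : Submodule ℝ H) (u uh : H) (huh : uh ∈ Vh)
    (F : H →ₗ[ℝ] ℝ) (hu : ∀ φ, a u φ = F φ) (hgal : ∀ v ∈ Vh, a uh v = F v)
    (Hreg : Set H) (N₂ : H → ℝ) (hN₂nn : ∀ w, 0 ≤ N₂ w)
    (c h Creg C₁ : ℝ) (hc : 0 ≤ c) (hh : 0 ≤ h) (hCreg : 0 ≤ Creg) (hC₁ : 0 ≤ C₁)
    (happrox : ∀ w ∈ Hreg, ∃ v ∈ Vh, ‖w - v‖ ≤ c * h * N₂ w)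
    (hdual : ∀ g : H, ∃ w ∈ Hreg, (∀ φ, a φ w = ip g φ) ∧ N₂ w ≤ Creg * norm₀ g)
    (hH1 : ‖u - uh‖ ≤ C₁ * h * N₂ u) :
    norm₀ (u - uh) ≤ (M * c * Creg * C₁) * h ^ 2 * N₂ u := by
  set e := u - uh with he
  obtain ⟨w, hwreg, hw, hwN⟩ := hdual e
  obtain ⟨v, hv, hvw⟩ := happrox w hwreg
  have hE0 : 0 ≤ norm₀ e := by rw [hnorm₀]; exact Real.sqrt_nonneg _
  rcases eq_or_lt_of_le hE0 with hE | hE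
  · rw [← hE]
    exact mul_nonneg (by positivity) (hN₂nn u)
  · -- Galerkin orthogonality: a e v = 0
    have horth : a e v = 0 := by
      have : a e v = a u v - a uh v := by
        rw [he, map_sub, LinearMap.sub_apply]
      rw [this, hu v, hgal v hv, sub_self]
    have hsq : ip e e = norm₀ e ^ 2 := by
      rw [hnorm₀, Real.sq_sqrt (hip_nn e)]
    have key : norm₀ e ^ 2 = a e (w - v) := by
      rw [map_sub, ← hsq, horth, sub_zero, hw e]
    have h1 : norm₀ e ^ 2 ≤ M * ‖e‖ * ‖w - v‖ := by
      rw [key]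
      exact le_trans (le_abs_self _) (hbdd e (w - v))
    have h2 : M * ‖e‖ * ‖w - v‖ ≤ M * (C₁ * h * N₂ u) * (c * h * (Creg * norm₀ e)) := by
      have hwv : ‖w - v‖ ≤ c * h * (Creg * norm₀ e) := by
        calc ‖w - v‖ ≤ c * h * N₂ w := hvw
          _ ≤ c * h * (Creg * norm₀ e) := by
              apply mul_le_mul_of_nonneg_left hwN (by positivity)
      have := mul_le_mul (mul_le_mul_of_nonneg_left hH1 hM.le) hwv (norm_nonneg _)
        (mul_nonneg hM.le (mul_nonneg (mul_nonneg hC₁ hh) (hN₂nn u)))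
      linarith
    have h3 : norm₀ e ^ 2 ≤ ((M * c * Creg * C₁) * h ^ 2 * N₂ u) * norm₀ e := by
      calc norm₀ e ^ 2 ≤ M * (C₁ * h * N₂ u) * (c * h * (Creg * norm₀ e)) :=
            le_trans h1 h2
        _ = ((M * c * Creg * C₁) * h ^ 2 * N₂ u) * norm₀ e := by ring
    calc norm₀ e = norm₀ e ^ 2 / norm₀ e := by field_simp [hE.ne']
      _ ≤ _ := by
          rw [div_le_iff₀ hE]
          exact h3
end
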